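/- arXiv:2002.02922 — 4 statements merged into one kernel-verified Lean document; each statement's English description precedes it below -/
import Mathlib

section
/- For any continuous f, B : [0,∞) → ℝ with f(0) ≥ B(0), the reflected path R_f B(t) = min( inf_{0≤s≤t}(f(s)+B(t)−B(s)), B(t) ) is itself a continuous function of t. -/
/-!
Substituting `s = t * u` turns the infimum over `[0, t]` into an infimum over the fixed compact
interval `[0, 1]` of a jointly continuous function of `(t, u)`, and such infima depend
continuously on `t`. To get joint continuity on all of `ℝ × ℝ`, `f` and `B` are first extended
to the whole line by `s ↦ g (max s 0)`.
-/

/-- Skorokhod reflection of `B` off `f`. -/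
noncomputable def skorokhodReflect (f B : ℝ → ℝ) (t : ℝ) : ℝ :=
  min (sInf ((fun s => f s + B t - B s) '' Set.Icc 0 t)) (B t)

open Set

lemma ContinuousOn.continuous_comp_max_zero {β : Type*} [TopologicalSpace β] {g : ℝ → β}
    (hg : ContinuousOn g (Ici 0)) : Continuous fun s => g (max s 0) :=
  hg.comp_continuous (continuous_id.max continuous_const) fun s => le_max_right s 0

lemma image_Icc_zero_eq_image_mul_Icc_zero_one {α : Type*} (g : ℝ → α) {t : ℝ}
    (ht : 0 ≤ t) :
    g '' Icc 0 t = (fun u => g (t * u)) '' Icc 0 1 := by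
  rw [← image_image g (t * ·), image_mul_left_Icc ht zero_le_one, mul_zero, mul_one]

lemma continuousOn_sInf_image_Icc_zero {α : Type*} [ConditionallyCompleteLinearOrder α]
    [TopologicalSpace α] [OrderTopology α] {G : ℝ → ℝ → α}
    (hG : Continuous (Function.uncurry G)) :
    ContinuousOn (fun t => sInf (G t '' Icc 0 t)) (Ici 0) := by
  have hrescaled : Continuous fun t => sInf ((fun u => G t (t * u)) '' Icc 0 1) :=
    isCompact_Icc.continuous_sInf (f := fun t u => G t (t * u))
      (hG.comp (continuous_fst.prodMk (continuous_fst.mul continuous_snd)))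
  refine hrescaled.continuousOn.congr fun t ht => ?_
  rw [image_Icc_zero_eq_image_mul_Icc_zero_one (G t) ht]

theorem skorokhodReflect_continuous_general (f B : ℝ → ℝ)
    (hf : ContinuousOn f (Set.Ici 0)) (hB : ContinuousOn B (Set.Ici 0)) :
    ContinuousOn (skorokhodReflect f B) (Set.Ici 0) := by
  set G : ℝ → ℝ → ℝ := fun t s => f (max s 0) + B (max t 0) - B (max s 0)
  have hG : Continuous (Function.uncurry G) := by
    have hf' := hf.continuous_comp_max_zero
    have hB' := hB.continuous_comp_max_zero
    exact (hf'.comp continuous_snd).add (hB'.comp continuous_fst) |>.sub (hB'.comp continuous_snd)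
  refine ((continuousOn_sInf_image_Icc_zero hG).inf hB).congr fun t (ht : 0 ≤ t) => ?_
  have hG_eq : G t '' Icc 0 t = (fun s => f s + B t - B s) '' Icc 0 t :=
    image_congr fun s (hs : s ∈ Icc 0 t) => by simp only [G, max_eq_left ht, max_eq_left hs.1]
  simp only [skorokhodReflect, hG_eq]

theorem skorokhodReflect_continuous (f B : ℝ → ℝ)
    (hf : ContinuousOn f (Set.Ici 0)) (hB : ContinuousOn B (Set.Ici 0))
    (h0 : B 0 ≤ f 0) :
    ContinuousOn (skorokhodReflect f B) (Set.Ici 0) :=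
  skorokhodReflect_continuous_general f B hf hB
end

section
/- For integers m ≥ 1 and reals t, x, y, the rescaled binomial kernel converges: κ^{−(m−1)/2} · C(⌊√κ x + κt⌋ − ⌊√κ y + κt⌋ − 1, m−1) · 1{⌊√κ x + κt⌋ ≥ ⌊√κ y + κt⌋ + m} → (x−y)^{m−1}/(m−1)! · 1{x > y} as κ → ∞, for x ≠ y. -/
/-!
Let `N = ⌊√κ x + κt⌋ - ⌊√κ y + κt⌋`. The drift `κt` cancels and each floor moves its argument
by less than one, so `N = √κ (x - y) + O(1)`. If `x ≤ y` then `N ≤ 0 < m` and the kernel vanishes.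
If `x > y` then `N → ∞`, and `(m - 1)! C(N - 1, m - 1)` is a product of `m - 1` factors
`N - 1 - i = √κ (x - y) + O(1)`, so after dividing by `√κ ^ (m - 1)` each factor tends to `x - y`.
-/

open Filter Topology

section

variable {α : Type*} {l : Filter α} {f g s : α → ℝ} {L : ℝ}

theorem tendsto_div_of_abs_sub_le (hs : Tendsto s l atTop)
    (hf : Tendsto (fun a => f a / s a) l (𝓝 L)) {C : ℝ}
    (hfg : ∀ᶠ a in l, |g a - f a| ≤ C) :
    Tendsto (fun a => g a / s a) l (𝓝 L) := by
  have herr : Tendsto (fun a => (g a - f a) / s a) l (𝓝 0) := by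
    refine squeeze_zero_norm' ?_ ((tendsto_const_nhds (x := C)).div_atTop hs)
    filter_upwards [hfg, hs.eventually_gt_atTop 0] with a ha hsa
    rw [Real.norm_eq_abs, abs_div, abs_of_pos hsa]
    exact div_le_div_of_nonneg_right ha hsa.le
  simpa [sub_div] using hf.add herr

theorem tendsto_atTop_of_tendsto_div (hs : Tendsto s l atTop)
    (hf : Tendsto (fun a => f a / s a) l (𝓝 L)) (hL : 0 < L) : Tendsto f l atTop :=
  (hf.pos_mul_atTop hL hs).congr' <| by
    filter_upwards [hs.eventually_gt_atTop 0] with a ha using div_mul_cancel₀ _ ha.ne'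

theorem tendsto_descPochhammer_eval_div_pow (hs : Tendsto s l atTop)
    (hf : Tendsto (fun a => f a / s a) l (𝓝 L)) (k : ℕ) :
    Tendsto (fun a => (descPochhammer ℝ k).eval (f a) / s a ^ k) l (𝓝 (L ^ k)) := by
  have hfactor (i : ℕ) : Tendsto (fun a => (f a - i) / s a) l (𝓝 L) :=
    tendsto_div_of_abs_sub_le hs hf (C := i) (Eventually.of_forall fun a => by simp)
  have hprod (a : α) : (descPochhammer ℝ k).eval (f a) / s a ^ k =
      ∏ i ∈ Finset.range k, (f a - i) / s a := by
    rw [descPochhammer_eval_eq_prod_range, Finset.prod_div_distrib, Finset.prod_const,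
      Finset.card_range]
  simpa only [hprod, Finset.prod_const, Finset.card_range] using
    tendsto_finsetProd (Finset.range k) fun i _ => hfactor i

theorem tendsto_cast_choose_div_pow {n : α → ℕ} (hs : Tendsto s l atTop)
    (hn : Tendsto (fun a => (n a : ℝ) / s a) l (𝓝 L)) (k : ℕ) :
    Tendsto (fun a => ((n a).choose k : ℝ) / s a ^ k) l (𝓝 (L ^ k / k.factorial)) := by
  simp_rw [Nat.cast_choose_eq_descPochhammer_div, div_right_comm _ (k.factorial : ℝ)]
  exact (tendsto_descPochhammer_eval_div_pow hs hn k).div_const _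

end

theorem abs_floor_sub_floor_sub_lt_one {R : Type*} [CommRing R] [LinearOrder R]
    [IsStrictOrderedRing R] [FloorRing R] (a b : R) :
    |((⌊a⌋ - ⌊b⌋ : ℤ) : R) - (a - b)| < 1 := by
  have := Int.floor_le a
  have := Int.floor_le b
  have := Int.lt_floor_add_one a
  have := Int.lt_floor_add_one b
  rw [abs_sub_lt_iff]
  push_cast
  constructor <;> linarith

theorem tendsto_floor_sub_floor_sub_one_div_sqrt (c : ℝ → ℝ) (x y : ℝ) :
    Tendsto (fun κ => ((⌊√κ * x + c κ⌋ - ⌊√κ * y + c κ⌋ - 1 : ℤ) : ℝ) / √κ) atTop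
      (𝓝 (x - y)) := by
  have hdrift : Tendsto (fun κ => √κ * (x - y) / √κ) atTop (𝓝 (x - y)) :=
    tendsto_const_nhds.congr' <| by
      filter_upwards [eventually_gt_atTop 0] with κ hκ
      rw [mul_div_cancel_left₀ _ (Real.sqrt_pos.2 hκ).ne']
  refine tendsto_div_of_abs_sub_le Real.tendsto_sqrt_atTop hdrift (C := 2)
    (Eventually.of_forall fun κ => ?_)
  have hgap :=
    abs_sub_lt_iff.1 (abs_floor_sub_floor_sub_lt_one (√κ * x + c κ) (√κ * y + c κ))
  rw [abs_sub_le_iff]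
  push_cast at hgap ⊢
  constructor <;> linarith

theorem rpow_neg_natCast_div_two {κ : ℝ} (hκ : 0 ≤ κ) (k : ℕ) :
    κ ^ (-(k : ℝ) / 2) = (√κ ^ k)⁻¹ := by
  rw [neg_div, Real.rpow_neg hκ, Real.sqrt_eq_rpow, ← Real.rpow_natCast, ← Real.rpow_mul hκ]
  ring_nf

theorem binomial_kernel_diffusive_limit_general (m : ℕ) (hm : 1 ≤ m) (t x y : ℝ) :
    Tendsto (fun κ : ℝ =>
        κ ^ (-((m : ℝ) - 1) / 2) *
          (if ⌊Real.sqrt κ * x + κ * t⌋ ≥ ⌊Real.sqrt κ * y + κ * t⌋ + m then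
            (Nat.choose (⌊Real.sqrt κ * x + κ * t⌋ - ⌊Real.sqrt κ * y + κ * t⌋ - 1).toNat
              (m - 1) : ℝ)
          else 0))
      atTop
      (nhds (if x > y then (x - y) ^ (m - 1) / (m - 1).factorial else 0)) := by
  set N : ℝ → ℤ := fun κ => ⌊√κ * x + κ * t⌋ - ⌊√κ * y + κ * t⌋ - 1
  rcases le_or_gt x y with hle | hlt
  · rw [if_neg hle.not_gt]
    refine tendsto_const_nhds.congr fun κ => ?_
    have : ⌊√κ * x + κ * t⌋ ≤ ⌊√κ * y + κ * t⌋ :=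
      Int.floor_le_floor (by nlinarith [Real.sqrt_nonneg κ])
    rw [if_neg (by omega), mul_zero]
  rw [if_pos hlt]
  have hs := Real.tendsto_sqrt_atTop
  have hN := tendsto_floor_sub_floor_sub_one_div_sqrt (fun κ => κ * t) x y
  have hNtop : Tendsto N atTop atTop :=
    tendsto_intCast_atTop_iff.1 (tendsto_atTop_of_tendsto_div hs hN (sub_pos.2 hlt))
  have hcast : ∀ᶠ κ in atTop, ((N κ).toNat : ℝ) = (N κ : ℝ) := by
    filter_upwards [hNtop.eventually_ge_atTop 0] with κ hκ
    rw [← Int.cast_natCast, Int.toNat_of_nonneg hκ]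
  refine (tendsto_cast_choose_div_pow (n := fun κ => (N κ).toNat) hs
    (hN.congr' (hcast.mono fun κ h => by beta_reduce; rw [h])) (m - 1)).congr' ?_
  filter_upwards [eventually_ge_atTop 0, hNtop.eventually_ge_atTop (m - 1)] with κ hκ hNm
  rw [if_pos (by simp only [N] at hNm; omega), ← Nat.cast_pred hm, rpow_neg_natCast_div_two hκ,
    inv_mul_eq_div]

theorem binomial_kernel_diffusive_limit (m : ℕ) (hm : 1 ≤ m) (t x y : ℝ) (hxy : x ≠ y) :
    Tendsto (fun κ : ℝ =>
        κ ^ (-((m : ℝ) - 1) / 2) *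
          (if ⌊Real.sqrt κ * x + κ * t⌋ ≥ ⌊Real.sqrt κ * y + κ * t⌋ + m then
            (Nat.choose (⌊Real.sqrt κ * x + κ * t⌋ - ⌊Real.sqrt κ * y + κ * t⌋ - 1).toNat
              (m - 1) : ℝ)
          else 0))
      atTop
      (nhds (if x > y then (x - y) ^ (m - 1) / (m - 1).factorial else 0)) :=
  binomial_kernel_diffusive_limit_general m hm t x y
end

section
/- With h_k^n defined recursively by h_k^n(k,z) = 1 and h_k^n(ℓ,x) = ∫_x^{X₀(n−ℓ)} h_k^n(ℓ+1,y) dy for ℓ < k, one has the derivative identity ∂_x^k h_ℓ^n(0, x)|_{x = X₀(n−k)} = (−1)^k · 1{k = ℓ} for all 0 ≤ k, ℓ ≤ n−1. -/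
/-!
By the fundamental theorem of calculus, `h ℓ j` is the primitive of `-h ℓ (j + 1)` vanishing at
`X₀ (n - j)`. Hence the `m`-th derivative of `h ℓ 0` is `(-1) ^ m * h ℓ m` for `m ≤ ℓ`: at
`X₀ (n - m)` it is an integral over an empty interval when `m < ℓ`, and `(-1) ^ ℓ` when `m = ℓ`.
Beyond `ℓ` one differentiates the constant `(-1) ^ ℓ`, which gives `0`.
-/

open intervalIntegral

theorem hasDerivAt_integral_left_of_continuous {f : ℝ → ℝ} (hf : Continuous f) (b x : ℝ) :
    HasDerivAt (fun u => ∫ y in u..b, f y) (-f x) x :=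
  integral_hasDerivAt_left (hf.intervalIntegrable _ _)
    hf.stronglyMeasurable.stronglyMeasurableAtFilter hf.continuousAt

theorem iteratedDeriv_eq_zero_of_lt {𝕜 F : Type*} [NontriviallyNormedField 𝕜]
    [NormedAddCommGroup F] [NormedSpace 𝕜 F] {f : 𝕜 → F} {N m : ℕ} {c : F}
    (hN : iteratedDeriv N f = fun _ => c) (hm : N < m) : iteratedDeriv m f = 0 := by
  obtain ⟨d, rfl⟩ : ∃ d, m = d + 1 + N := ⟨m - N - 1, by omega⟩
  funext x
  rw [iteratedDeriv_eq_iterate, Function.iterate_add_apply, ← iteratedDeriv_eq_iterate (n := N), hN,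
    ← iteratedDeriv_eq_iterate, iteratedDeriv_const, if_neg d.succ_ne_zero, Pi.zero_apply]

structure IsIteratedPrimitive (g : ℕ → ℝ → ℝ) (a : ℕ → ℝ) (N : ℕ) : Prop where
  top : ∀ x, g N x = 1
  step : ∀ j < N, ∀ x, g j x = ∫ y in x..a j, g (j + 1) y

namespace IsIteratedPrimitive

variable {g : ℕ → ℝ → ℝ} {a : ℕ → ℝ} {N : ℕ}

theorem continuous (hg : IsIteratedPrimitive g a N) {j : ℕ} (hj : j ≤ N) : Continuous (g j) := by
  induction hj using Nat.decreasingInduction with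
  | self => simpa only [funext hg.top] using continuous_const
  | of_succ j hj ih =>
    rw [funext (hg.step j hj)]
    exact continuous_iff_continuousAt.2 fun x =>
      (hasDerivAt_integral_left_of_continuous ih (a j) x).continuousAt

theorem hasDerivAt (hg : IsIteratedPrimitive g a N) {j : ℕ} (hj : j < N) (x : ℝ) :
    HasDerivAt (g j) (-g (j + 1) x) x := by
  rw [funext (hg.step j hj)]
  exact hasDerivAt_integral_left_of_continuous (hg.continuous hj) (a j) x

theorem iteratedDeriv_eq (hg : IsIteratedPrimitive g a N) {m : ℕ} (hm : m ≤ N) (x : ℝ) :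
    iteratedDeriv m (g 0) x = (-1) ^ m * g m x := by
  induction m generalizing x with
  | zero => simp
  | succ m ih =>
    rw [iteratedDeriv_succ, funext fun y => ih (by omega) y,
      deriv_const_mul _ (hg.hasDerivAt hm x).differentiableAt, (hg.hasDerivAt hm x).deriv]
    ring

theorem iteratedDeriv_eq_zero (hg : IsIteratedPrimitive g a N) {m : ℕ} (hm : N < m) :
    iteratedDeriv m (g 0) = 0 :=
  iteratedDeriv_eq_zero_of_lt (c := (-1) ^ N)
    (funext fun x => by rw [hg.iteratedDeriv_eq le_rfl, hg.top, mul_one]) hm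

theorem iteratedDeriv_apply_endpoint (hg : IsIteratedPrimitive g a N) (k : ℕ) :
    iteratedDeriv k (g 0) (a k) = if k = N then (-1) ^ k else 0 := by
  rcases lt_trichotomy k N with hk | rfl | hk
  · rw [hg.iteratedDeriv_eq hk.le, hg.step k hk, integral_same, mul_zero, if_neg hk.ne]
  · rw [hg.iteratedDeriv_eq le_rfl, hg.top, mul_one, if_pos rfl]
  · rw [hg.iteratedDeriv_eq_zero hk, if_neg hk.ne', Pi.zero_apply]

end IsIteratedPrimitive

theorem h_derivative_identity (n : ℕ) (X₀ : ℕ → ℝ) (h : ℕ → ℕ → ℝ → ℝ)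
    (hbase : ∀ k, ∀ z : ℝ, h k k z = 1)
    (hrec : ∀ k, ∀ ℓ < k, ∀ x : ℝ, h k ℓ x = ∫ y in x..(X₀ (n - ℓ)), h k (ℓ + 1) y) :
    ∀ k ≤ n - 1, ∀ ℓ ≤ n - 1,
      iteratedDeriv k (fun x => h ℓ 0 x) (X₀ (n - k)) =
        if k = ℓ then (-1 : ℝ) ^ k else 0 := by
  intro k _ ℓ _
  have hprim : IsIteratedPrimitive (h ℓ) (fun j => X₀ (n - j)) ℓ := ⟨hbase ℓ, hrec ℓ⟩
  exact hprim.iteratedDeriv_apply_endpoint k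
end

section
/- Let Ψ_k^n = ∂^k e^{(t/2)∂²} δ_{X₀(n−k)}, i.e. Ψ_k^n(x) = ∂_x^k p_t(x − X₀(n−k)) with p_t the heat kernel, and let Φ_k^n = e^{−(t/2)∂²} h_k^n(0,·) (backwards heat flow applied to the polynomial h_k^n(0,·)). Then the biorthogonality relation ∫_ℝ Ψ_k^n(x) Φ_ℓ^n(x) dx = 1{k = ℓ} holds for all 0 ≤ k, ℓ ≤ n−1. -/
open Polynomial MeasureTheory

/-- The backwards heat flow `e^{-(t/2)∂²}` acting on polynomials:
`e^{-(t/2)∂²} p = Σ_j (-t/2)^j p^{(2j)} / j!` (a finite sum). -/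
noncomputable def backHeat (t : ℝ) (p : Polynomial ℝ) : Polynomial ℝ :=
  ∑ j ∈ Finset.range (p.natDegree + 1),
    C ((-t / 2) ^ j / (Nat.factorial j)) * derivative^[2 * j] p

/-- `Ψ_k^n(x) = ∂^k p_t(x - X₀(n-k))` with `p_t` the heat kernel. -/
noncomputable def PsiRBM (t : ℝ) (n : ℕ) (X₀ : ℕ → ℝ) (k : ℕ) (x : ℝ) : ℝ :=
  iteratedDeriv k
    (fun u => (2 * Real.pi * t) ^ (-(1 : ℝ) / 2) *
      Real.exp (-(u - X₀ (n - k)) ^ 2 / (2 * t))) x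

/-!
Integrating by parts `k` times moves `∂^k` from the heat kernel centred at `a = X₀(n-k)` onto
`Φ_ℓ^n`, and `∂` commutes with the backwards heat flow `B = e^{-(t/2)∂²}`. Pairing with the heat
kernel then undoes `B` at `a`: the functional `p ↦ ∫ p_t(x - a) (B p)(x) dx` is linear, equals `1`
on `1`, and kills every multiple `(X - a) q`, because `B((X - a) q) = (X - a) B q - t B q'` while
Gaussian integration by parts gives `∫ p_t(x - a) (x - a) r(x) dx = t ∫ p_t(x - a) r'(x) dx`.
Hence the pairing is `(-1)^k ∂^k h_ℓ^n(0, X₀(n-k))`, and unwinding the iterated integrals defining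
`h_ℓ^n` shows that this derivative is `(-1)^k 1{k = ℓ}`.
-/

namespace Polynomial

theorem iterate_derivative_X_sub_C_mul {R : Type*} [CommRing R] (a : R) (p : R[X]) (m : ℕ) :
    derivative^[m] ((X - C a) * p) = (X - C a) * derivative^[m] p + m • derivative^[m - 1] p := by
  rw [sub_mul, iterate_map_sub (derivative : R[X] →ₗ[R] R[X]), mul_comm X,
    iterate_derivative_mul_X, iterate_derivative_C_mul]
  ring

end Polynomial

section BackHeat

variable (t : ℝ)

theorem backHeat_eq_sum_range (p : ℝ[X]) {N : ℕ} (hN : p.natDegree ≤ N) :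
    backHeat t p = ∑ j ∈ Finset.range (N + 1),
      C ((-t / 2) ^ j / (Nat.factorial j)) * derivative^[2 * j] p := by
  refine Finset.sum_subset (Finset.range_subset_range.2 (by omega)) fun j _ hj => ?_
  rw [iterate_derivative_eq_zero (by simp at hj; omega), mul_zero]

theorem backHeat_add (p q : ℝ[X]) : backHeat t (p + q) = backHeat t p + backHeat t q := by
  have hle := natDegree_add_le p q
  rw [backHeat_eq_sum_range t (p + q) hle,
    backHeat_eq_sum_range t p (le_max_left _ _), backHeat_eq_sum_range t q (le_max_right _ _),
    ← Finset.sum_add_distrib]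
  simp only [iterate_map_add (derivative : ℝ[X] →ₗ[ℝ] ℝ[X]), mul_add]

@[simp]
theorem backHeat_C (c : ℝ) : backHeat t (C c) = C c := by
  simp [backHeat]

theorem derivative_backHeat (p : ℝ[X]) : derivative (backHeat t p) = backHeat t (derivative p) := by
  rw [backHeat, derivative_sum,
    backHeat_eq_sum_range t (derivative p) ((natDegree_derivative_le p).trans (Nat.sub_le _ _))]
  simp only [derivative_C_mul, ← Function.iterate_succ_apply' derivative,
    ← Function.iterate_succ_apply derivative]

theorem iterate_derivative_backHeat (k : ℕ) (p : ℝ[X]) :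
    derivative^[k] (backHeat t p) = backHeat t (derivative^[k] p) :=
  Function.Commute.iterate_left (fun p => derivative_backHeat t p) k p

theorem backHeat_X_sub_C_mul (a : ℝ) (p : ℝ[X]) :
    backHeat t ((X - C a) * p) = (X - C a) * backHeat t p + C (-t) * backHeat t (derivative p) := by
  have hdeg : ((X - C a) * p).natDegree ≤ p.natDegree + 1 :=
    natDegree_mul_le.trans (by have := natDegree_X_sub_C_le a; omega)
  have hcoeff : ∀ i : ℕ, (-t / 2) ^ (i + 1) / (Nat.factorial (i + 1)) * (2 * (i + 1) : ℕ)
      = -t * ((-t / 2) ^ i / (Nat.factorial i)) := by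
    intro i
    push_cast [Nat.factorial_succ]
    field_simp
    ring
  rw [backHeat_eq_sum_range t _ hdeg, backHeat_eq_sum_range t p (Nat.le_succ _),
    backHeat_eq_sum_range t (derivative p) ((natDegree_derivative_le p).trans (Nat.sub_le _ _)),
    Finset.mul_sum, Finset.mul_sum]
  simp only [iterate_derivative_X_sub_C_mul, mul_add, Finset.sum_add_distrib]
  rw [Finset.sum_range_succ' (fun j => C _ * (_ • _)), mul_zero, zero_smul, mul_zero, add_zero]
  refine congrArg₂ (· + ·) ?_ ?_
  · exact Finset.sum_congr rfl fun j _ => by ring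
  · refine Finset.sum_congr rfl fun i _ => ?_
    rw [nsmul_eq_mul, show 2 * (i + 1) - 1 = 2 * i + 1 by omega, ← mul_assoc, ← C_eq_natCast,
      ← C_mul, hcoeff, Function.iterate_succ_apply, C_mul]
    ring

end BackHeat

-- `PsiRBM t n X₀ k` unfolds to `iteratedDeriv k (heatKernel t (X₀ (n - k)))`.
noncomputable def heatKernel (t a x : ℝ) : ℝ :=
  (2 * Real.pi * t) ^ (-(1 : ℝ) / 2) * Real.exp (-(x - a) ^ 2 / (2 * t))

section HeatKernel

variable {t : ℝ} (a : ℝ)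

theorem heatKernel_eq_gaussianPDFReal (ht : 0 < t) :
    heatKernel t a = ProbabilityTheory.gaussianPDFReal a t.toNNReal := by
  ext x
  rw [heatKernel, ProbabilityTheory.gaussianPDFReal_def, Real.coe_toNNReal t ht.le,
    Real.sqrt_eq_rpow, ← Real.rpow_neg (by positivity), neg_div]

theorem integral_heatKernel (ht : 0 < t) : ∫ x, heatKernel t a x = 1 := by
  rw [heatKernel_eq_gaussianPDFReal a ht,
    ProbabilityTheory.integral_gaussianPDFReal_eq_one a (by simpa using ht)]

theorem hasDerivAt_heatKernel (x : ℝ) :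
    HasDerivAt (heatKernel t a) (-((x - a) / t) * heatKernel t a x) x := by
  have h : HasDerivAt (fun y => -(y - a) ^ 2 / (2 * t)) (-((x - a) / t)) x :=
    ((((hasDerivAt_id' x).sub_const a).pow 2).neg.div_const (2 * t)).congr_deriv (by ring)
  exact (h.exp.const_mul _).congr_deriv (by rw [heatKernel]; ring)

theorem exists_iteratedDeriv_heatKernel (k : ℕ) :
    ∃ q : ℝ[X], iteratedDeriv k (heatKernel t a) = fun x => q.eval x * heatKernel t a x := by
  induction k with
  | zero => exact ⟨1, by simp⟩
  | succ k ih =>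
    obtain ⟨q, hq⟩ := ih
    refine ⟨derivative q - C t⁻¹ * (X - C a) * q, funext fun x => ?_⟩
    rw [iteratedDeriv_succ, hq]
    refine ((q.hasDerivAt x).mul (hasDerivAt_heatKernel a x)).deriv.trans ?_
    simp only [eval_sub, eval_mul, eval_C, eval_X]
    ring

theorem integrable_heatKernel_mul_eval (ht : 0 < t) (p : ℝ[X]) :
    Integrable fun x => heatKernel t a x * p.eval x := by
  have hgauss : ∀ q : ℝ[X], Integrable fun y => q.eval y * Real.exp (-(1 / (2 * t)) * y ^ 2) := by
    intro q
    induction q using Polynomial.induction_on' with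
    | add p q hp hq =>
      simp only [eval_add, add_mul]
      exact hp.add hq
    | monomial m c =>
      have hm := (integrable_rpow_mul_exp_neg_mul_sq (b := 1 / (2 * t)) (by positivity)
        (s := m) (neg_one_lt_zero.trans_le m.cast_nonneg)).const_mul c
      simpa only [eval_monomial, Real.rpow_natCast, mul_assoc] using hm
  refine (((hgauss (p.comp (X + C a))).comp_sub_right a).const_mul
    ((2 * Real.pi * t) ^ (-(1 : ℝ) / 2))).congr (ae_of_all _ fun x => ?_)
  simp only [heatKernel, eval_comp, eval_add, eval_X, eval_C, sub_add_cancel]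
  field_simp

end HeatKernel

section HeatKernelPairing

variable {t : ℝ} (a : ℝ)

theorem integral_iteratedDeriv_succ_heatKernel_mul (ht : 0 < t) (k : ℕ) (r : ℝ[X]) :
    ∫ x, iteratedDeriv (k + 1) (heatKernel t a) x * r.eval x =
      -∫ x, iteratedDeriv k (heatKernel t a) x * (derivative r).eval x := by
  obtain ⟨q, hq⟩ := exists_iteratedDeriv_heatKernel a (t := t) k
  obtain ⟨q', hq'⟩ := exists_iteratedDeriv_heatKernel a (t := t) (k + 1)
  have hint : ∀ s p : ℝ[X],
      Integrable ((fun x => s.eval x * heatKernel t a x) * fun x => p.eval x) :=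
    fun s p => (integrable_heatKernel_mul_eval a ht (s * p)).congr
      (ae_of_all _ fun x => by simp only [Pi.mul_apply, eval_mul]; ring)
  have hderiv : ∀ x, HasDerivAt (iteratedDeriv k (heatKernel t a))
      (iteratedDeriv (k + 1) (heatKernel t a) x) x := by
    intro x
    rw [iteratedDeriv_succ, hq]
    exact ((q.hasDerivAt x).mul (hasDerivAt_heatKernel a x)).differentiableAt.hasDerivAt
  rw [integral_mul_deriv_eq_deriv_mul_of_integrable (fun x _ => hderiv x)
    (fun x _ => r.hasDerivAt x) (hq ▸ hint q _) (hq' ▸ hint q' r) (hq ▸ hint q r), neg_neg]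

theorem integral_iteratedDeriv_heatKernel_mul (ht : 0 < t) (k : ℕ) (r : ℝ[X]) :
    ∫ x, iteratedDeriv k (heatKernel t a) x * r.eval x =
      (-1) ^ k * ∫ x, heatKernel t a x * (derivative^[k] r).eval x := by
  induction k generalizing r with
  | zero => simp
  | succ k ih =>
    rw [integral_iteratedDeriv_succ_heatKernel_mul a ht, ih, Function.iterate_succ_apply]
    ring

theorem integral_heatKernel_mul_X_sub_C_mul (ht : 0 < t) (p : ℝ[X]) :
    ∫ x, heatKernel t a x * ((X - C a) * p).eval x =
      t * ∫ x, heatKernel t a x * (derivative p).eval x := by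
  have h := integral_iteratedDeriv_succ_heatKernel_mul a ht 0 p
  have hd : deriv (heatKernel t a) = fun x => -((x - a) / t) * heatKernel t a x :=
    funext fun x => (hasDerivAt_heatKernel a x).deriv
  rw [iteratedDeriv_one, iteratedDeriv_zero, hd] at h
  rw [← neg_neg (∫ x, _ * (derivative p).eval x), ← h, ← integral_neg,
    ← integral_const_mul]
  congr 1 with x
  simp only [eval_mul, eval_sub, eval_X, eval_C]
  field_simp

theorem integral_heatKernel_mul_eval_backHeat (ht : 0 < t) (p : ℝ[X]) :
    ∫ x, heatKernel t a x * (backHeat t p).eval x = p.eval a := by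
  obtain ⟨q, hq⟩ := X_sub_C_dvd_sub_C_eval (a := a) (p := p)
  have hp : backHeat t p = C (p.eval a) +
      ((X - C a) * backHeat t q + C (-t) * backHeat t (derivative q)) :=
    calc backHeat t p = backHeat t (C (p.eval a) + (X - C a) * q) := by rw [← hq, add_sub_cancel]
      _ = _ := by rw [backHeat_add, backHeat_C, backHeat_X_sub_C_mul]
  have hint := integrable_heatKernel_mul_eval a ht
  simp only [hp, eval_add, mul_add]
  rw [integral_add (hint _) ((hint _).fun_add (hint _)), integral_add (hint _) (hint _),
    integral_heatKernel_mul_X_sub_C_mul a ht, derivative_backHeat]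
  simp only [eval_C, eval_mul, mul_left_comm (heatKernel t a _), integral_mul_const,
    integral_const_mul, integral_heatKernel a ht]
  ring

end HeatKernelPairing

theorem hasDerivAt_of_eq_integral_left {F g : ℝ → ℝ} {c : ℝ} (hg : Continuous g)
    (hF : ∀ x, F x = ∫ y in x..c, g y) (x : ℝ) : HasDerivAt F (-g x) x := by
  rw [funext hF]
  exact intervalIntegral.integral_hasDerivAt_left (hg.intervalIntegrable _ _)
    (hg.stronglyMeasurableAtFilter _ _) hg.continuousAt

section IteratedIntegral

variable {f : ℕ → ℝ → ℝ} {b : ℕ → ℝ} {m : ℕ}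

theorem continuous_of_eq_iterated_integral (hm : ∀ x, f m x = 1)
    (hf : ∀ j < m, ∀ x, f j x = ∫ y in x..b j, f (j + 1) y) {j : ℕ} (hj : j ≤ m) :
    Continuous (f j) := by
  induction hj using Nat.decreasingInduction with
  | self => simpa only [funext hm] using continuous_const
  | of_succ j hj ih =>
    exact continuous_iff_continuousAt.2 fun x =>
      (hasDerivAt_of_eq_integral_left ih (hf j hj) x).continuousAt

theorem eval_iterate_derivative_of_eq_iterated_integral (hm : ∀ x, f m x = 1)
    (hf : ∀ j < m, ∀ x, f j x = ∫ y in x..b j, f (j + 1) y)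
    {p : ℝ[X]} (hp : ∀ x, p.eval x = f 0 x) {j : ℕ} (hj : j ≤ m) (x : ℝ) :
    (derivative^[j] p).eval x = (-1) ^ j * f j x := by
  induction j generalizing x with
  | zero => simp [hp]
  | succ j ih =>
    have hder : HasDerivAt (fun x => (derivative^[j] p).eval x) ((-1) ^ j * -f (j + 1) x) x := by
      simp only [ih (by omega)]
      exact (hasDerivAt_of_eq_integral_left (continuous_of_eq_iterated_integral hm hf hj)
        (hf j (by omega)) x).const_mul _
    rw [Function.iterate_succ_apply', (Polynomial.hasDerivAt _ x).unique hder]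
    ring

theorem eval_iterate_derivative_at_of_eq_iterated_integral (hm : ∀ x, f m x = 1)
    (hf : ∀ j < m, ∀ x, f j x = ∫ y in x..b j, f (j + 1) y)
    {p : ℝ[X]} (hp : ∀ x, p.eval x = f 0 x) (k : ℕ) :
    (derivative^[k] p).eval (b k) = (-1) ^ k * if k = m then 1 else 0 := by
  rcases lt_trichotomy k m with hkm | rfl | hmk
  · rw [eval_iterate_derivative_of_eq_iterated_integral hm hf hp hkm.le, hf k hkm,
      intervalIntegral.integral_same, if_neg hkm.ne]
  · rw [eval_iterate_derivative_of_eq_iterated_integral hm hf hp le_rfl, hm, if_pos rfl]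
  · have hconst : derivative^[m] p = C ((-1) ^ m) := Polynomial.funext fun x => by
      rw [eval_iterate_derivative_of_eq_iterated_integral hm hf hp le_rfl, hm, eval_C, mul_one]
    rw [← Nat.sub_add_cancel hmk.le, Function.iterate_add_apply, hconst,
      iterate_derivative_C (by omega), eval_zero, if_neg (by omega), mul_zero]

end IteratedIntegral

theorem RBM_biorthogonality (t : ℝ) (ht : 0 < t) (n : ℕ) (X₀ : ℕ → ℝ)
    (h : ℕ → ℕ → ℝ → ℝ)
    (hbase : ∀ k, ∀ z : ℝ, h k k z = 1)
    (hrec : ∀ k, ∀ ℓ < k, ∀ x : ℝ, h k ℓ x = ∫ y in x..(X₀ (n - ℓ)), h k (ℓ + 1) y)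
    (P : ℕ → Polynomial ℝ) (hP : ∀ k, ∀ x : ℝ, (P k).eval x = h k 0 x) :
    ∀ k ≤ n - 1, ∀ ℓ ≤ n - 1,
      ∫ x : ℝ, PsiRBM t n X₀ k x * (backHeat t (P ℓ)).eval x =
        if k = ℓ then 1 else 0 := by
  intro k _ ℓ _
  calc ∫ x, PsiRBM t n X₀ k x * (backHeat t (P ℓ)).eval x
      = (-1) ^ k *
          ∫ x, heatKernel t (X₀ (n - k)) x * (backHeat t (derivative^[k] (P ℓ))).eval x := by
        rw [← iterate_derivative_backHeat]
        exact integral_iteratedDeriv_heatKernel_mul _ ht k _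
    _ = (-1) ^ k * (derivative^[k] (P ℓ)).eval (X₀ (n - k)) := by
        rw [integral_heatKernel_mul_eval_backHeat _ ht]
    _ = (-1) ^ k * ((-1) ^ k * if k = ℓ then 1 else 0) := by
        rw [eval_iterate_derivative_at_of_eq_iterated_integral (b := fun j => X₀ (n - j))
          (hbase ℓ) (hrec ℓ) (hP ℓ) k]
    _ = if k = ℓ then 1 else 0 := by
        rw [← mul_assoc, ← mul_pow, neg_one_mul, neg_neg, one_pow, one_mul]
end
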